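/- Let G be a connected block graph and let B be a block of G on t vertices. Then every assignment of the colors 1, …, t bijectively to the vertices of B can be extended to a Grundy coloring of G using k colors for some k ≤ ω(G), whose restriction to B is the given assignment. -/

import Mathlib

variable {V : Type*} {W : Type*}

/-- A proper coloring of `G` using colors `{1, …, k}`: colors lie in `{1,…,k}`,
adjacent vertices get different colors, and every color in `{1,…,k}` is used. -/
def IsProperKColoring (G : SimpleGraph V) (k : ℕ) (c : V → ℕ) : Prop :=
  (∀ v, c v ∈ Set.Icc 1 k) ∧
  (∀ u v, G.Adj u v → c u ≠ c v) ∧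
  (∀ j ∈ Set.Icc 1 k, ∃ v, c v = j)

/-- `u` is a b-vertex: every color `j ∈ {1,…,k}` with `j ≠ c u` appears on a neighbor of `u`. -/
def IsBVertex (G : SimpleGraph V) (k : ℕ) (c : V → ℕ) (u : V) : Prop :=
  ∀ j ∈ Set.Icc 1 k, j ≠ c u → ∃ w, G.Adj u w ∧ c w = j

/-- `u` is a nice vertex: it is a b-vertex and for every color `j ≠ c u` in `{1,…,k}`
it has a b-vertex neighbor of color `j`. -/
def IsNiceVertex (G : SimpleGraph V) (k : ℕ) (c : V → ℕ) (u : V) : Prop :=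
  IsBVertex G k c u ∧
  ∀ j ∈ Set.Icc 1 k, j ≠ c u → ∃ w, G.Adj u w ∧ c w = j ∧ IsBVertex G k c w

/-- A Grundy coloring using `k` colors: proper, and every vertex of color `j` has a
neighbor of each smaller color `i ≥ 1`. -/
def IsGrundyColoring (G : SimpleGraph V) (k : ℕ) (c : V → ℕ) : Prop :=
  IsProperKColoring G k c ∧
  ∀ i j : ℕ, 1 ≤ i → i < j → j ≤ k → ∀ v, c v = j → ∃ w, G.Adj v w ∧ c w = i

/-- A z-coloring: a Grundy coloring with a nice vertex of (top) color `k`. -/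
def IsZColoring (G : SimpleGraph V) (k : ℕ) (c : V → ℕ) : Prop :=
  IsGrundyColoring G k c ∧ ∃ u, c u = k ∧ IsNiceVertex G k c u

/-- A b*-coloring: a proper coloring with a nice vertex of (top) color `k`. -/
def IsBStarColoring (G : SimpleGraph V) (k : ℕ) (c : V → ℕ) : Prop :=
  IsProperKColoring G k c ∧ ∃ u, c u = k ∧ IsNiceVertex G k c u

/-- The z-chromatic number: largest `k` admitting a z-coloring with `k` colors. -/
noncomputable def zNum (G : SimpleGraph V) : ℕ :=
  sSup {k | ∃ c : V → ℕ, IsZColoring G k c}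

/-- The b*-chromatic number: largest `k` admitting a b*-coloring with `k` colors. -/
noncomputable def bStar (G : SimpleGraph V) : ℕ :=
  sSup {k | ∃ c : V → ℕ, IsBStarColoring G k c}

/-- `m*(G)`: the largest `k` such that some vertex `u` has `k` distinct neighbors,
each of degree at least `k`. -/
noncomputable def mStar (G : SimpleGraph V) : ℕ :=
  sSup {k | ∃ (u : V) (s : Finset V), (↑s : Set V) ⊆ G.neighborSet u ∧ s.card = k ∧
    ∀ v ∈ s, k ≤ (G.neighborSet v).ncard}

/-- The clique number `ω(G)`. -/
noncomputable def omegaNum (G : SimpleGraph V) : ℕ :=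
  sSup {n | ∃ s : Finset V, G.IsNClique n s}
/-- `B` is (the vertex set of) a block of `G`: a maximal set of vertices inducing a
connected subgraph with no cut vertex. -/
def IsBlockSet (G : SimpleGraph V) (B : Set V) : Prop :=
  B.Nonempty ∧ (G.induce B).Connected ∧
  (∀ v ∈ B, (G.induce (B \ {v})).Preconnected) ∧
  ∀ B' : Set V, B ⊆ B' → (G.induce B').Connected →
    (∀ v ∈ B', (G.induce (B' \ {v})).Preconnected) → B' = B

/-- A block graph: every block is a clique. -/
def IsBlockGraph (G : SimpleGraph V) : Prop :=
  ∀ B : Set V, IsBlockSet G B → G.IsClique B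

/-!
Colour the vertices outside `B` first-fit, in order of increasing distance to `B`, keeping the
given colours on `B`; a first-fit colouring is Grundy. A vertex `v ∉ B` of colour `j` sees the
colours `1, …, j - 1` on neighbours no farther from `B` than `v`. Two such neighbours are joined by
a path avoiding `v` (down shortest paths to `B` and across `B`); with `v` this path spans a subgraph
without cut vertex, which lies in a block and is therefore a clique. Hence `v` and these neighbours
form a clique of size `j`, and `j ≤ ω(G)`.
-/

namespace SimpleGraph

variable {G : SimpleGraph V}

lemma Walk.IsPath.notMem_support_takeUntil_or_dropUntil [DecidableEq V] {u w x y : V}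
    {p : G.Walk u w} (hp : p.IsPath) (hx : x ∈ p.support) (hxy : x ≠ y) :
    y ∉ (p.takeUntil x hx).support ∨ y ∉ (p.dropUntil x hx).support := by
  by_contra! h
  rw [← p.take_spec hx] at hp
  exact hp.ne_of_mem_support_of_append hxy.symm h.1 h.2 rfl

lemma connected_induce_of_forall_walk {S : Set V} {z : V} (hz : z ∈ S)
    (h : ∀ x ∈ S, ∃ q : G.Walk x z, ∀ y ∈ q.support, y ∈ S) : (G.induce S).Connected := by
  refine (connected_iff_exists_forall_reachable _).2 ⟨⟨z, hz⟩, fun x => ?_⟩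
  obtain ⟨q, hq⟩ := h x x.2
  exact ⟨(q.induce S hq).reverse⟩

end SimpleGraph

def IsNonseparableSet (G : SimpleGraph V) (S : Set V) : Prop :=
  (G.induce S).Connected ∧ ∀ v ∈ S, (G.induce (S \ {v})).Preconnected

section BlockGraph

open SimpleGraph

variable {G : SimpleGraph V}

lemma IsNonseparableSet.exists_isBlockSet_superset [Finite V] {S : Set V}
    (hS : IsNonseparableSet G S) : ∃ T, S ⊆ T ∧ IsBlockSet G T := by
  obtain ⟨T, hST, hT⟩ := Finite.exists_le_maximal (p := IsNonseparableSet G) hS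
  refine ⟨T, hST, Set.nonempty_coe_sort.1 hT.1.1.nonempty, hT.1.1, hT.1.2, ?_⟩
  exact fun B' hTB' hconn hcut => (hT.2 ⟨hconn, hcut⟩ hTB').antisymm hTB'

lemma IsBlockGraph.isClique_of_isNonseparableSet [Finite V] (hG : IsBlockGraph G) {S : Set V}
    (hS : IsNonseparableSet G S) : G.IsClique S := by
  obtain ⟨T, hST, hT⟩ := hS.exists_isBlockSet_superset
  exact (hG T hT).subset hST

lemma isNonseparableSet_insert_support [DecidableEq V] {u v w : V} {p : G.Walk u w}
    (hp : p.IsPath) (hv : v ∉ p.support) (hvu : G.Adj v u) (hvw : G.Adj v w) :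
    IsNonseparableSet G (insert v {x | x ∈ p.support}) := by
  let viaU (x : V) (hx : x ∈ p.support) : G.Walk x v := (p.takeUntil x hx).reverse.concat hvu.symm
  let viaW (x : V) (hx : x ∈ p.support) : G.Walk x v := (p.dropUntil x hx).concat hvw.symm
  have mem_viaU {x : V} (hx : x ∈ p.support) {y : V} :
      y ∈ (viaU x hx).support ↔ y ∈ (p.takeUntil x hx).support ∨ y = v := by
    simp [viaU]
  have mem_viaW {x : V} (hx : x ∈ p.support) {y : V} :
      y ∈ (viaW x hx).support ↔ y ∈ (p.dropUntil x hx).support ∨ y = v := by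
    simp [viaW]
  refine ⟨connected_induce_of_forall_walk (Set.mem_insert v _) ?_, fun y hy => ?_⟩
  · rintro x (rfl | hx)
    · exact ⟨.nil, by simp⟩
    · refine ⟨viaU x hx, fun y hy => ?_⟩
      rcases (mem_viaU hx).1 hy with hy | rfl
      · exact Or.inr (p.support_takeUntil_subset_support hx hy)
      · exact Set.mem_insert _ _
  obtain rfl | hyp := hy
  · rw [Set.insert_sdiff_self_of_notMem (s := {x | x ∈ p.support}) hv]
    exact p.connected_induce_support.preconnected
  have hyv : y ≠ v := by rintro rfl; exact hv hyp
  have hvy : v ∈ insert v {x | x ∈ p.support} \ {y} := ⟨Set.mem_insert _ _, hyv.symm⟩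
  refine (connected_induce_of_forall_walk hvy ?_).preconnected
  rintro x ⟨rfl | hx, hxy⟩
  · exact ⟨.nil, by simp [hyv.symm]⟩
  rcases hp.notMem_support_takeUntil_or_dropUntil hx hxy with hy | hy
  · refine ⟨viaU x hx, fun z hz => ?_⟩
    rcases (mem_viaU hx).1 hz with hz | rfl
    · exact ⟨Or.inr (p.support_takeUntil_subset_support hx hz), ne_of_mem_of_not_mem hz hy⟩
    · exact hvy
  · refine ⟨viaW x hx, fun z hz => ?_⟩
    rcases (mem_viaW hx).1 hz with hz | rfl
    · exact ⟨Or.inr (p.support_dropUntil_subset_support hx hz), ne_of_mem_of_not_mem hz hy⟩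
    · exact hvy

lemma IsBlockGraph.adj_of_walk_avoiding [Finite V] (hG : IsBlockGraph G) {u v w : V}
    (hvu : G.Adj v u) (hvw : G.Adj v w) (huw : u ≠ w) (q : G.Walk u w) (hq : v ∉ q.support) :
    G.Adj u w := by
  classical
  refine hG.isClique_of_isNonseparableSet (isNonseparableSet_insert_support q.bypass_isPath
    (fun h => hq (q.support_bypass_subset_support h)) hvu hvw) ?_ ?_ huw
  · exact Or.inr q.bypass.start_mem_support
  · exact Or.inr q.bypass.end_mem_support

end BlockGraph

/-- Equal to `0`, not `∞`, when no vertex of `B` is reachable from `u`. -/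
noncomputable def distToSet (G : SimpleGraph V) (B : Set V) (u : V) : ℕ :=
  sInf {n | ∃ b ∈ B, ∃ p : G.Walk u b, p.length = n}

section distToSet

open SimpleGraph

variable {G : SimpleGraph V} {B : Set V}

lemma distToSet_le_length {u b : V} (hb : b ∈ B) (p : G.Walk u b) :
    distToSet G B u ≤ p.length :=
  Nat.sInf_le ⟨b, hb, p, rfl⟩

lemma exists_walk_length_eq_distToSet (hG : G.Preconnected) (hB : B.Nonempty) (u : V) :
    ∃ b ∈ B, ∃ p : G.Walk u b, p.length = distToSet G B u := by
  obtain ⟨b, hb⟩ := hB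
  have hne : {n | ∃ b ∈ B, ∃ p : G.Walk u b, p.length = n}.Nonempty :=
    ⟨_, b, hb, (hG u b).some, rfl⟩
  exact Nat.sInf_mem hne

lemma distToSet_eq_zero_iff (hG : G.Preconnected) (hB : B.Nonempty) {u : V} :
    distToSet G B u = 0 ↔ u ∈ B := by
  refine ⟨fun h => ?_, fun hu => Nat.le_zero.1 (distToSet_le_length hu .nil)⟩
  obtain ⟨b, hb, p, hp⟩ := exists_walk_length_eq_distToSet hG hB u
  rw [h] at hp
  exact Walk.eq_of_length_eq_zero hp ▸ hb

lemma distToSet_lt_of_mem_support [DecidableEq V] {u b x : V} (hb : b ∈ B) {p : G.Walk u b}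
    (hp : p.length = distToSet G B u) (hx : x ∈ p.support) (hxu : x ≠ u) :
    distToSet G B x < distToSet G B u := by
  have hlen := congrArg Walk.length (p.take_spec hx)
  rw [Walk.length_append] at hlen
  have htake : (p.takeUntil x hx).length ≠ 0 := fun h => hxu (Walk.eq_of_length_eq_zero h).symm
  have := distToSet_le_length hb (p.dropUntil x hx)
  omega

lemma IsBlockGraph.adj_of_distToSet_le [Finite V] (hG : IsBlockGraph G) (hconn : G.Preconnected)
    (hB : IsBlockSet G B) {u v w : V} (hvB : v ∉ B) (hvu : G.Adj v u) (hvw : G.Adj v w)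
    (huw : u ≠ w) (hu : distToSet G B u ≤ distToSet G B v)
    (hw : distToSet G B w ≤ distToSet G B v) : G.Adj u w := by
  classical
  have avoid {x b : V} (hb : b ∈ B) (p : G.Walk x b) (hp : p.length = distToSet G B x)
      (hvx : G.Adj v x) (hx : distToSet G B x ≤ distToSet G B v) : v ∉ p.support := fun h =>
    (distToSet_lt_of_mem_support hb hp h hvx.ne).not_ge hx
  obtain ⟨b₁, hb₁, p₁, hp₁⟩ := exists_walk_length_eq_distToSet hconn hB.1 u
  obtain ⟨b₂, hb₂, p₂, hp₂⟩ := exists_walk_length_eq_distToSet hconn hB.1 w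
  obtain ⟨q, hq⟩ : ∃ q : G.Walk b₁ b₂, ∀ x ∈ q.support, x ∈ B := by
    obtain rfl | hne := eq_or_ne b₁ b₂
    · exact ⟨.nil, by simpa⟩
    · exact ⟨(hG B hB hb₁ hb₂ hne).toWalk, by simp [hb₁, hb₂]⟩
  refine hG.adj_of_walk_avoiding hvu hvw huw (p₁.append (q.append p₂.reverse)) ?_
  simp only [Walk.mem_support_append_iff, Walk.support_reverse, List.mem_reverse, not_or]
  exact ⟨avoid hb₁ p₁ hp₁ hvu hu, fun h => hvB (hq v h), avoid hb₂ p₂ hp₂ hvw hw⟩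

lemma IsBlockGraph.isClique_setOf_adj_distToSet_le [Finite V] (hG : IsBlockGraph G)
    (hconn : G.Preconnected) (hB : IsBlockSet G B) (v : V) :
    G.IsClique {w | G.Adj v w ∧ distToSet G B w ≤ distToSet G B v} := by
  by_cases hv : v ∈ B
  · have hd0 : ∀ {x}, distToSet G B x = 0 ↔ x ∈ B :=
      distToSet_eq_zero_iff hconn ⟨v, hv⟩
    refine (hG B hB).subset fun w hw => ?_
    rw [← hd0] at hv ⊢
    exact Nat.le_zero.1 (hv ▸ hw.2)
  · exact fun u hu w hw huw => hG.adj_of_distToSet_le hconn hB hv hu.1 hw.1 huw hu.2 hw.2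

end distToSet

section Greedy

variable (G : SimpleGraph V) (B : Set V) (c₀ rank : V → ℕ)

open Classical in
noncomputable def greedyExtend (v : V) : ℕ :=
  if v ∈ B then c₀ v
  else sInf {j | 1 ≤ j ∧ ∀ u, G.Adj v u → rank u < rank v → greedyExtend u ≠ j}
termination_by rank v
decreasing_by assumption

variable {G B c₀ rank}

lemma greedyExtend_of_mem {v : V} (hv : v ∈ B) : greedyExtend G B c₀ rank v = c₀ v := by
  rw [greedyExtend, if_pos hv]

lemma greedyExtend_of_notMem {v : V} (hv : v ∉ B) :
    greedyExtend G B c₀ rank v =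
      sInf {j | 1 ≤ j ∧ ∀ u, G.Adj v u → rank u < rank v → greedyExtend G B c₀ rank u ≠ j} := by
  rw [greedyExtend, if_neg hv]

lemma greedyExtend_spec [Finite V] {v : V} (hv : v ∉ B) :
    1 ≤ greedyExtend G B c₀ rank v ∧ ∀ u, G.Adj v u → rank u < rank v →
      greedyExtend G B c₀ rank u ≠ greedyExtend G B c₀ rank v := by
  obtain ⟨M, hM⟩ := (Set.finite_range (greedyExtend G B c₀ rank)).bddAbove
  have hne : {j | 1 ≤ j ∧ ∀ u, G.Adj v u → rank u < rank v →
      greedyExtend G B c₀ rank u ≠ j}.Nonempty :=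
    ⟨M + 1, by omega, fun u _ _ h => by have := hM ⟨u, rfl⟩; omega⟩
  rw [greedyExtend_of_notMem hv]
  exact Nat.sInf_mem hne

lemma exists_adj_greedyExtend_eq {v : V} (hv : v ∉ B) {i : ℕ} (hi : 1 ≤ i)
    (hiv : i < greedyExtend G B c₀ rank v) :
    ∃ u, G.Adj v u ∧ rank u < rank v ∧ greedyExtend G B c₀ rank u = i := by
  rw [greedyExtend_of_notMem hv] at hiv
  simpa [hi] using Nat.notMem_of_lt_sInf hiv

lemma one_le_greedyExtend [Finite V] (hc₀ : ∀ b ∈ B, 1 ≤ c₀ b) (v : V) :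
    1 ≤ greedyExtend G B c₀ rank v := by
  by_cases hv : v ∈ B
  · exact greedyExtend_of_mem hv ▸ hc₀ v hv
  · exact (greedyExtend_spec hv).1

lemma greedyExtend_ne_of_adj [Finite V] (hrank : Function.Injective rank)
    (hB : ∀ b ∈ B, ∀ x ∉ B, rank b < rank x)
    (hc₀ : ∀ u ∈ B, ∀ v ∈ B, G.Adj u v → c₀ u ≠ c₀ v) {u v : V} (huv : G.Adj u v) :
    greedyExtend G B c₀ rank u ≠ greedyExtend G B c₀ rank v := by
  wlog hlt : rank u < rank v generalizing u v
  · exact (this huv.symm <| (not_lt.1 hlt).lt_of_ne (hrank.ne huv.ne.symm)).symm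
  by_cases hv : v ∈ B
  · have hu : u ∈ B := by_contra fun hu => (hB v hv u hu).not_gt hlt
    rw [greedyExtend_of_mem hu, greedyExtend_of_mem hv]
    exact hc₀ u hu v hv huv
  · exact (greedyExtend_spec hv).2 u huv.symm hlt

end Greedy

lemma exists_injective_lt_of_lt [Finite V] (f : V → ℕ) :
    ∃ r : V → ℕ, Function.Injective r ∧ ∀ x y, f x < f y → r x < r y := by
  obtain ⟨n, ⟨e⟩⟩ := Finite.exists_equiv_fin V
  have hlt : ∀ x y, f x < f y → f x * n + e x < f y * n + e y := fun x y hxy => by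
    have h₁ : (f x + 1) * n ≤ f y * n := Nat.mul_le_mul_right n hxy
    have h₂ := (e x).isLt
    rw [add_one_mul] at h₁
    omega
  refine ⟨fun x => f x * n + e x, fun x y hxy => ?_, hlt⟩
  obtain hf | hf | hf := lt_trichotomy (f x) (f y)
  · exact absurd hxy (hlt x y hf).ne
  · simp only [hf, add_right_inj, Fin.val_inj] at hxy
    exact e.injective hxy
  · exact absurd hxy (hlt y x hf).ne'

namespace SimpleGraph

variable {G : SimpleGraph V}

lemma IsClique.ncard_le_omegaNum [Finite V] {s : Set V} (hs : G.IsClique s) :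
    s.ncard ≤ omegaNum G := by
  have hbdd : BddAbove {n | ∃ t : Finset V, G.IsNClique n t} := by
    refine ⟨Nat.card V, ?_⟩
    rintro n ⟨t, ht⟩
    rw [← ht.card_eq, ← Set.ncard_coe_finset]
    exact Set.ncard_le_card _
  refine le_csSup hbdd ⟨s.toFinite.toFinset, ?_, ?_⟩
  · simpa using hs
  · rw [Set.ncard_eq_toFinset_card s]

lemma IsClique.exists_adj_eq_of_bijOn {B : Set V} {c : V → ℕ} {t : ℕ} (hB : G.IsClique B)
    (hc : Set.BijOn c B (Set.Icc 1 t)) {v : V} (hv : v ∈ B) {i : ℕ} (hi : 1 ≤ i)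
    (hiv : i < c v) : ∃ w ∈ B, G.Adj v w ∧ c w = i := by
  obtain ⟨w, hw, rfl⟩ := hc.surjOn ⟨hi, hiv.le.trans (hc.mapsTo hv).2⟩
  exact ⟨w, hw, hB hv hw (by rintro rfl; exact hiv.false), rfl⟩

end SimpleGraph

lemma le_omegaNum_of_isClique [Finite V] {G : SimpleGraph V} {c : V → ℕ} {v : V} {s : Set V}
    (hs : G.IsClique s) (hsv : s ⊆ G.neighborSet v)
    (hcol : ∀ i, 1 ≤ i → i < c v → ∃ w ∈ s, c w = i) : c v ≤ omegaNum G := by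
  have hcard : c v - 1 ≤ s.ncard := calc
    c v - 1 = (Set.Ico 1 (c v)).ncard := (Set.ncard_Ico_nat 1 (c v)).symm
    _ ≤ (c '' s).ncard := Set.ncard_le_ncard (fun i hi => hcol i hi.1 hi.2) (s.toFinite.image c)
    _ ≤ s.ncard := Set.ncard_image_le s.toFinite
  have hvs : v ∉ s := fun h => G.irrefl (hsv h)
  have hclique := (hs.insert fun w hw _ => hsv hw).ncard_le_omegaNum
  rw [Set.ncard_insert_of_notMem hvs] at hclique
  omega

lemma isGrundyColoring_sup [Fintype V] [Nonempty V] {G : SimpleGraph V} {c : V → ℕ}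
    (hpos : ∀ v, 1 ≤ c v) (hadj : ∀ u v, G.Adj u v → c u ≠ c v)
    (hlower : ∀ v i, 1 ≤ i → i < c v → ∃ w, G.Adj v w ∧ c w = i) :
    IsGrundyColoring G (Finset.univ.sup c) c := by
  obtain ⟨v, -, hv⟩ := Finset.exists_mem_eq_sup Finset.univ Finset.univ_nonempty c
  refine ⟨⟨fun u => ⟨hpos u, Finset.le_sup (Finset.mem_univ u)⟩, hadj, fun j hj => ?_⟩,
    fun i j hi hij _ u hu => hlower u i hi (hu ▸ hij)⟩
  obtain hjk | hjk := hj.2.eq_or_lt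
  · exact ⟨v, hv.symm.trans hjk.symm⟩
  · obtain ⟨w, -, hw⟩ := hlower v j hj.1 (hv ▸ hjk)
    exact ⟨w, hw⟩

theorem blockGraph_precoloring_extension [Fintype V] (G : SimpleGraph V)
    (hconn : G.Connected) (hbg : IsBlockGraph G)
    (B : Set V) (hB : IsBlockSet G B) (t : ℕ) (c₀ : V → ℕ)
    (hc₀ : Set.BijOn c₀ B (Set.Icc 1 t)) :
    ∃ k ≤ omegaNum G, ∃ c : V → ℕ,
      IsGrundyColoring G k c ∧ ∀ v ∈ B, c v = c₀ v := by
  have : Nonempty V := hB.1.to_subtype.map Subtype.val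
  set d := distToSet G B
  have hd0 {x : V} : d x = 0 ↔ x ∈ B := distToSet_eq_zero_iff hconn.preconnected hB.1
  obtain ⟨rank, hinj, hmono⟩ := exists_injective_lt_of_lt d
  set c := greedyExtend G B c₀ rank
  have hcB : ∀ v ∈ B, c v = c₀ v := fun v hv => greedyExtend_of_mem hv
  have hlower (v : V) (i : ℕ) (hi : 1 ≤ i) (hiv : i < c v) :
      ∃ w ∈ {w | G.Adj v w ∧ d w ≤ d v}, c w = i := by
    by_cases hv : v ∈ B
    · obtain ⟨w, hw, hvw, rfl⟩ := (hbg B hB).exists_adj_eq_of_bijOn hc₀ hv hi (hcB v hv ▸ hiv)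
      exact ⟨w, ⟨hvw, (hd0.2 hw).trans_le (Nat.zero_le _)⟩, hcB w hw⟩
    · obtain ⟨w, hvw, hrank, rfl⟩ := exists_adj_greedyExtend_eq hv hi hiv
      exact ⟨w, ⟨hvw, not_lt.1 fun h => (hmono v w h).not_gt hrank⟩, rfl⟩
  refine ⟨Finset.univ.sup c, Finset.sup_le fun v _ => ?_, c, isGrundyColoring_sup ?_ ?_ ?_, hcB⟩
  · exact le_omegaNum_of_isClique (hbg.isClique_setOf_adj_distToSet_le hconn.preconnected hB v)
      (fun w hw => hw.1) (hlower v)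
  · exact one_le_greedyExtend fun b hb => (hc₀.mapsTo hb).1
  · refine fun u v => greedyExtend_ne_of_adj hinj (fun b hb x hx => hmono b x ?_)
      fun u hu v hv huv h => huv.ne (hc₀.injOn hu hv h)
    exact (hd0.2 hb).trans_lt (Nat.pos_of_ne_zero (mt hd0.1 hx))
  · exact fun v i hi hiv => (hlower v i hi hiv).imp fun w h => ⟨h.1.1, h.2⟩
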